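/- arXiv:2110.15104 — 4 statements merged into one kernel-verified Lean document; each statement's English description precedes it below -/
import Mathlib

section
/- Let $n\ge 2$, $k\ge 0$ with $2k+n-2>0$, and let $p$ be a nonzero $k$-homogeneous harmonic polynomial on $\mathbb{R}^n$. Then for each coordinate index $\alpha$, the polynomial $S_\alpha(p) := x_\alpha p - \frac{|x|^2 \partial_\alpha p}{2k+n-2}$ is nonzero. -/
open MvPolynomial

/-- A polynomial is harmonic if its formal Laplacian vanishes. -/
def IsHarmonic {n : ℕ} (p : MvPolynomial (Fin n) ℝ) : Prop :=
  ∑ i : Fin n, pderiv i (pderiv i p) = 0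

/-!
Suppose `x_α p = c |x|² ∂_α p` with `c = (2k+n-2)⁻¹`, and let `x^m` be a monomial of `p` whose
exponent `d = m α` of `x_α` is maximal. Compare coefficients of `x_α x^m`: on the right, the terms
`x_i² ∂_α p` with `i ≠ α` only contain monomials of `x_α`-degree `< d`, while `x_α² ∂_α p`
contributes `d` times the coefficient of `x^m` in `p`. Hence `c d = 1`, i.e. `2k+n-2 = d ≤ k`,
which is impossible when `n ≥ 2` and `2k+n-2 > 0`.
-/

namespace MvPolynomial

variable {σ R : Type*} [CommSemiring R]

theorem exists_mem_support_apply_eq_degreeOf {p : MvPolynomial σ R} (hp : p ≠ 0) (i : σ) :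
    ∃ m ∈ p.support, m i = p.degreeOf i := by
  classical
  obtain ⟨m, hm, hmax⟩ :=
    Finset.exists_mem_eq_sup p.support (support_nonempty.mpr hp) (fun m => m i)
  exact ⟨m, hm, by rw [degreeOf_eq_sup, hmax]⟩

theorem coeff_pderiv_eq_zero_of_degreeOf_le {p : MvPolynomial σ R} {i : σ} {s : σ →₀ ℕ}
    (hs : p.degreeOf i ≤ s i) : coeff s (pderiv i p) = 0 := by
  rw [coeff_pderiv, notMem_support_iff.mp (notMem_support_of_degreeOf_lt i (by simpa)), zero_mul]

theorem coeff_X_mul_pderiv_self (p : MvPolynomial σ R) (i : σ) (m : σ →₀ ℕ) :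
    coeff m (X i * pderiv i p) = m i * coeff m p := by
  classical
  by_cases hmi : m i = 0
  · rw [coeff_X_mul', if_neg (by simpa using hmi), hmi, Nat.cast_zero, zero_mul]
  · obtain ⟨m', rfl⟩ : ∃ m', m = Finsupp.single i 1 + m' :=
      ⟨m - Finsupp.single i 1, (add_tsub_cancel_of_le (by simpa [Nat.one_le_iff_ne_zero])).symm⟩
    rw [coeff_X_mul, coeff_pderiv, add_comm m']
    simp [add_comm, mul_comm]

theorem coeff_X_pow_mul_pderiv_eq_zero_of_ne {p : MvPolynomial σ R} {i j : σ} (hij : i ≠ j)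
    (n : ℕ) {s : σ →₀ ℕ} (hs : p.degreeOf j ≤ s j) : coeff s (X i ^ n * pderiv j p) = 0 := by
  classical
  rw [X_pow_eq_monomial, coeff_monomial_mul']
  split_ifs
  · rw [coeff_pderiv_eq_zero_of_degreeOf_le, mul_zero]
    simpa [Finsupp.single_eq_of_ne' hij] using hs
  · rfl

theorem coeff_single_add_sum_X_sq_mul_pderiv [Fintype σ] {p : MvPolynomial σ R} {j : σ}
    {m : σ →₀ ℕ} (hm : p.degreeOf j ≤ m j) :
    coeff (Finsupp.single j 1 + m) ((∑ i, X i ^ 2) * pderiv j p) = m j * coeff m p := by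
  rw [Finset.sum_mul, coeff_sum, Finset.sum_eq_single j]
  · rw [pow_two, mul_assoc, coeff_X_mul, coeff_X_mul_pderiv_self]
  · intro i _ hij
    exact coeff_X_pow_mul_pderiv_eq_zero_of_ne hij 2 (by simp only [Finsupp.add_apply, Finsupp.single_eq_same]; omega)
  · simp

theorem mul_degreeOf_eq_one_of_X_mul_eq [IsDomain R] [Fintype σ]
    {p : MvPolynomial σ R} (hp : p ≠ 0) {j : σ} {c : R}
    (h : X j * p = C c * (∑ i, X i ^ 2) * pderiv j p) : c * p.degreeOf j = 1 := by
  obtain ⟨m, hm, hmj⟩ := exists_mem_support_apply_eq_degreeOf hp j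
  have hcoeff := congrArg (coeff (Finsupp.single j 1 + m)) h
  rw [coeff_X_mul, mul_assoc, coeff_C_mul,
    coeff_single_add_sum_X_sq_mul_pderiv hmj.ge, hmj, ← mul_assoc] at hcoeff
  exact mul_right_cancel₀ (mem_support_iff.mp hm) ((one_mul _).trans hcoeff).symm

end MvPolynomial

theorem proj_ne_zero_general {n : ℕ} (hn : 2 ≤ n) (k : ℕ) (hkn : 0 < 2 * k + n - 2)
    (p : MvPolynomial (Fin n) ℝ) (hp : p ≠ 0)
    (hhom : p.IsHomogeneous k) (α : Fin n) :
    X α * p - C ((2 * (k : ℝ) + n - 2)⁻¹) *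
        (∑ i : Fin n, (X i : MvPolynomial (Fin n) ℝ) ^ 2) * pderiv α p ≠ 0 := by
  intro h
  have hcd := mul_degreeOf_eq_one_of_X_mul_eq hp (sub_eq_zero.mp h)
  have hdk : p.degreeOf α ≤ k := (degreeOf_le_totalDegree p α).trans (hhom.totalDegree hp).le
  have hd : (p.degreeOf α : ℝ) + 2 = 2 * k + n := by
    have hne : (2 * (k : ℝ) + n - 2) ≠ 0 := by
      rintro hz
      simp [hz] at hcd
    rw [inv_mul_eq_one₀ hne] at hcd
    linarith
  have : p.degreeOf α + 2 = 2 * k + n := by exact_mod_cast hd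
  omega

/-- if `p` is a nonzero `k`-homogeneous harmonic polynomial on ℝⁿ
(n ≥ 2, 2k+n-2 > 0), then `S_α(p) := x_α p - |x|² ∂_α p / (2k+n-2)` is nonzero. -/
theorem proj_ne_zero {n : ℕ} (hn : 2 ≤ n) (k : ℕ) (hkn : 0 < 2 * k + n - 2)
    (p : MvPolynomial (Fin n) ℝ) (hp : p ≠ 0)
    (hhom : p.IsHomogeneous k) (hharm : IsHarmonic p) (α : Fin n) :
    X α * p - C ((2 * (k : ℝ) + n - 2)⁻¹) *
        (∑ i : Fin n, (X i : MvPolynomial (Fin n) ℝ) ^ 2) * pderiv α p ≠ 0 :=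
  proj_ne_zero_general hn k hkn p hp hhom α
end

section
/- A nonzero harmonic polynomial on $\mathbb{R}^n$ ($n\ge 2$) is not divisible by $|x|^2 = x_1^2 + \cdots + x_n^2$. -/
/-!
The Fischer inner product `⟪f, g⟫ = ∑_d d! f_d g_d`, with `d! = ∏ᵢ (dᵢ)!`, is positive definite
and makes multiplication by `Xᵢ` adjoint to `∂ᵢ`. Hence multiplication by `|x|² = ∑ᵢ Xᵢ²` is
adjoint to the Laplacian, and if `p = |x|² q` is harmonic then
`⟪p, p⟫ = ⟪|x|² q, p⟫ = ⟪q, Δ p⟫ = 0`, so `p = 0`.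
-/

open MvPolynomial

open scoped Nat

namespace Finsupp

variable {σ : Type*}

def prodFactorial (d : σ →₀ ℕ) : ℕ := d.prod fun _ k => k !

theorem prodFactorial_pos (d : σ →₀ ℕ) : 0 < d.prodFactorial :=
  Finset.prod_pos fun _ _ => Nat.factorial_pos _

theorem prodFactorial_add_single (d : σ →₀ ℕ) (i : σ) :
    (d + single i 1).prodFactorial = (d i + 1) * d.prodFactorial := by
  unfold prodFactorial
  rw [← mul_prod_erase' d i _ fun _ => Nat.factorial_zero,
    ← mul_prod_erase' (d + single i 1) i _ fun _ => Nat.factorial_zero]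
  simp [erase_add, Nat.factorial_succ, mul_assoc]

end Finsupp

namespace MvPolynomial

variable {σ R : Type*}

section CommSemiring

variable [CommSemiring R]

variable (σ R) in
noncomputable def fischerPairing : MvPolynomial σ R →ₗ[R] MvPolynomial σ R →ₗ[R] R :=
  (basisMonomials σ R).constr R fun d => (d.prodFactorial : R) • lcoeff R d

theorem fischerPairing_apply (f g : MvPolynomial σ R) :
    fischerPairing σ R f g = ∑ d ∈ f.support, coeff d f * d.prodFactorial * coeff d g := by
  rw [fischerPairing, Module.Basis.constr_apply, Finsupp.sum, LinearMap.sum_apply]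
  simp only [LinearMap.smul_apply, lcoeff_apply, smul_eq_mul, mul_assoc]
  rfl

theorem fischerPairing_monomial (d : σ →₀ ℕ) (c : R) (g : MvPolynomial σ R) :
    fischerPairing σ R (monomial d c) g = c * d.prodFactorial * coeff d g := by
  have hmonomial : monomial d c = c • basisMonomials σ R d := by simp [smul_monomial]
  rw [hmonomial, map_smul, fischerPairing, Module.Basis.constr_basis]
  simp [mul_assoc]

theorem fischerPairing_X_mul (i : σ) (f g : MvPolynomial σ R) :
    fischerPairing σ R (X i * f) g = fischerPairing σ R f (pderiv i g) := by
  induction f using MvPolynomial.induction_on' with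
  | add p q hp hq => simp only [mul_add, map_add, LinearMap.add_apply, hp, hq]
  | monomial d c =>
    rw [X, monomial_mul, one_mul, add_comm, fischerPairing_monomial, fischerPairing_monomial,
      coeff_pderiv, Finsupp.prodFactorial_add_single]
    push_cast
    ring

theorem fischerPairing_sum_X_sq_mul (s : Finset σ) (q p : MvPolynomial σ R) :
    fischerPairing σ R ((∑ i ∈ s, X i ^ 2) * q) p =
      fischerPairing σ R q (∑ i ∈ s, pderiv i (pderiv i p)) := by
  simp only [Finset.sum_mul, map_sum, LinearMap.sum_apply, pow_two, mul_assoc,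
    fischerPairing_X_mul]

end CommSemiring

section OrderedRing

variable [CommRing R] [LinearOrder R] [IsStrictOrderedRing R]

theorem fischerPairing_self_pos {p : MvPolynomial σ R} (hp : p ≠ 0) :
    0 < fischerPairing σ R p p := by
  rw [fischerPairing_apply]
  refine Finset.sum_pos (fun d hd => ?_) (support_nonempty.2 hp)
  rw [mul_right_comm]
  exact mul_pos (mul_self_pos.2 (mem_support_iff.1 hd)) (by exact_mod_cast d.prodFactorial_pos)

theorem not_sum_X_sq_dvd_of_laplacian_eq_zero [Fintype σ] {p : MvPolynomial σ R} (hp : p ≠ 0)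
    (hΔ : ∑ i, pderiv i (pderiv i p) = 0) : ¬ (∑ i, X i ^ 2 : MvPolynomial σ R) ∣ p := by
  rintro ⟨q, rfl⟩
  have hpos := fischerPairing_self_pos hp
  rw [fischerPairing_sum_X_sq_mul, hΔ, map_zero] at hpos
  exact lt_irrefl 0 hpos

end OrderedRing

end MvPolynomial

theorem nonzero_harmonic_not_div_normSq_general {n : ℕ}
    (p : MvPolynomial (Fin n) ℝ) (hp : p ≠ 0) (hharm : IsHarmonic p) :
    ¬ (∑ i : Fin n, (X i : MvPolynomial (Fin n) ℝ) ^ 2) ∣ p :=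
  not_sum_X_sq_dvd_of_laplacian_eq_zero hp hharm

/-- A nonzero harmonic polynomial on ℝⁿ (n ≥ 2) is not divisible by
`|x|² = x₁² + ⋯ + xₙ²`. -/
theorem nonzero_harmonic_not_div_normSq {n : ℕ} (hn : 2 ≤ n)
    (p : MvPolynomial (Fin n) ℝ) (hp : p ≠ 0) (hharm : IsHarmonic p) :
    ¬ (∑ i : Fin n, (X i : MvPolynomial (Fin n) ℝ) ^ 2) ∣ p :=
  nonzero_harmonic_not_div_normSq_general p hp hharm
end

section
/- Fix $n\ge 2$. There exists a constant $C(n)$ such that for all $(k,h)\in\mathbb{Z}^2$ with $k\ge 0$, $k+h>-n$, and $h\ne -2$, one has $\frac{(1+|h|)(1+\max\{k,|h|\})}{|(h+2)(2k+h+n)|} \le C(n)$. -/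
/-!
Both factors of the numerator are controlled by the corresponding factors of the denominator:
for an integer `h ≠ -2` one has `1 + |h| ≤ 4 |h + 2|` (equality at `h = -3`), and the constraints
`k ≥ 0`, `k + h > -n` force `2k + h + n ≥ max(k + 1, 1)`, which dominates `1 + max(k, |h|)` up to
the factor `n + 2`.
-/

theorem Int.one_add_abs_le_four_mul_abs_add_two {h : ℤ} (hh : h ≠ -2) :
    1 + |h| ≤ 4 * |h + 2| := by
  rcases abs_cases h with ⟨e1, _⟩ | ⟨e1, _⟩ <;>
    rcases abs_cases (h + 2) with ⟨e2, _⟩ | ⟨e2, _⟩ <;> omega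

theorem Int.one_add_max_abs_le_mul {n : ℕ} {k h : ℤ} (hk : 0 ≤ k) (hkh : -(n : ℤ) < k + h) :
    1 + max k |h| ≤ (n + 2) * (2 * k + h + n) := by
  rcases le_or_gt 0 h with hh | hh
  · have hmax : 1 + max k |h| ≤ 2 * (2 * k + h + n) := by
      rw [abs_of_nonneg hh]; omega
    nlinarith
  · -- here `-h < k + n`, while `2k + h + n ≥ k + 1`
    have hmax : 1 + max k |h| ≤ k + n + 1 := by
      rw [abs_of_neg hh]; omega
    nlinarith

theorem Int.numerator_le_mul_denominator {n : ℕ} {k h : ℤ} (hk : 0 ≤ k)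
    (hkh : -(n : ℤ) < k + h) (hh : h ≠ -2) :
    (1 + |h|) * (1 + max k |h|) ≤ 4 * (n + 2) * |(h + 2) * (2 * k + h + n)| := by
  have hpos : 0 < 2 * k + h + n := by omega
  calc (1 + |h|) * (1 + max k |h|)
      ≤ (4 * |h + 2|) * ((n + 2) * (2 * k + h + n)) :=
        mul_le_mul (one_add_abs_le_four_mul_abs_add_two hh) (one_add_max_abs_le_mul hk hkh)
          (by positivity) (by positivity)
    _ = 4 * (n + 2) * |(h + 2) * (2 * k + h + n)| := by
        rw [abs_mul, abs_of_pos hpos]; ring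

theorem inverse_laplacian_bound_general (n : ℕ) :
    ∃ C : ℝ, 0 < C ∧ ∀ k h : ℤ, 0 ≤ k → -(n : ℤ) < k + h → h ≠ -2 →
      (1 + |(h : ℝ)|) * (1 + (max k |h| : ℤ)) / |((h : ℝ) + 2) * (2 * k + h + n)| ≤ C := by
  refine ⟨4 * (n + 2), by positivity, fun k h hk hkh hh => ?_⟩
  have hden : (0 : ℝ) < |((h : ℝ) + 2) * (2 * k + h + n)| := by
    have hA : (h : ℝ) + 2 ≠ 0 := by exact_mod_cast (by omega : h + 2 ≠ 0)
    have hB : (0 : ℝ) < 2 * k + h + n := by exact_mod_cast (by omega : 0 < 2 * k + h + n)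
    positivity
  rw [div_le_iff₀ hden]
  exact_mod_cast Int.numerator_le_mul_denominator hk hkh hh

/-- for each `n ≥ 2` there is `C(n)` bounding
`⟨h⟩⟨max{k,|h|}⟩ / |(h+2)(2k+h+n)|` on `{k ≥ 0, k+h > -n, h ≠ -2}`. -/
theorem inverse_laplacian_bound (n : ℕ) (hn : 2 ≤ n) :
    ∃ C : ℝ, 0 < C ∧ ∀ k h : ℤ, 0 ≤ k → -(n : ℤ) < k + h → h ≠ -2 →
      (1 + |(h : ℝ)|) * (1 + (max k |h| : ℤ)) / |((h : ℝ) + 2) * (2 * k + h + n)| ≤ C :=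
  inverse_laplacian_bound_general n
end

section
/- For $\ell\ge 1$ define $\Sigma_\ell := \{(x,y)\in\mathbb{Z}^2 : x+y\ge \ell,\ y\ge -2\ell,\ 4x+3y\ge 0,\ 2x+3y\ge 0,\ y \text{ even}\}$. Then $\Sigma_\ell + \Sigma_m \subseteq \Sigma_{\ell+m}$ for all $\ell, m\ge 1$, and in fact $\Sigma_\ell = \Sigma_1 + \cdots + \Sigma_1$ ($\ell$ times). -/
open Pointwise

/-- The cone `Σ_ℓ ⊆ ℤ²` from the paper. -/
def SigmaSet (ℓ : ℕ) : Set (ℤ × ℤ) :=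
  {p | (ℓ : ℤ) ≤ p.1 + p.2 ∧ -(2 * (ℓ : ℤ)) ≤ p.2 ∧ 0 ≤ 4 * p.1 + 3 * p.2 ∧
    0 ≤ 2 * p.1 + 3 * p.2 ∧ Even p.2}

theorem Set.eq_setOf_fin_sum_of_succ_eq_add {M : Type*} [AddCommMonoid M] {S : ℕ → Set M}
    (hS : ∀ n, 1 ≤ n → S (n + 1) = S 1 + S n) {ℓ : ℕ} (hℓ : 1 ≤ ℓ) :
    S ℓ = {s | ∃ a : Fin ℓ → M, (∀ i, a i ∈ S 1) ∧ ∑ i, a i = s} := by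
  induction ℓ, hℓ using Nat.le_induction with
  | base =>
    ext s
    refine ⟨fun hs => ⟨fun _ => s, fun _ => hs, by simp⟩, ?_⟩
    rintro ⟨a, ha, rfl⟩
    simpa using ha 0
  | succ n hn ih =>
    rw [hS n hn, ih]
    ext s
    simp only [Set.mem_add, Set.mem_ofPred_eq]
    constructor
    · rintro ⟨q, hq, _, ⟨a, ha, rfl⟩, rfl⟩
      exact ⟨Fin.cons q a, Fin.cases hq ha, Fin.sum_cons q a⟩
    · rintro ⟨a, ha, rfl⟩
      exact ⟨a 0, ha 0, _, ⟨fun i => a i.succ, fun i => ha i.succ, rfl⟩,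
        (Fin.sum_univ_succ a).symm⟩

namespace SigmaSet

theorem mk_mem_iff {ℓ : ℕ} {x y : ℤ} :
    (x, y) ∈ SigmaSet ℓ ↔ (ℓ : ℤ) ≤ x + y ∧ -(2 * (ℓ : ℤ)) ≤ y ∧ 0 ≤ 4 * x + 3 * y ∧
      0 ≤ 2 * x + 3 * y ∧ 2 ∣ y := by
  simp only [SigmaSet, Set.mem_ofPred_eq, even_iff_two_dvd]

theorem add_subset (ℓ m : ℕ) : SigmaSet ℓ + SigmaSet m ⊆ SigmaSet (ℓ + m) := by
  rw [Set.add_subset_iff]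
  rintro ⟨x, y⟩ hp ⟨x', y'⟩ hq
  rw [mk_mem_iff] at hp hq
  rw [Prod.mk_add_mk, mk_mem_iff]
  omega

/-- The summand taken from `Σ₁` is `(3, -2)`, `(-1, 2)` or `(-3, 4)`, according as `4x + 3y`
is at least `6`, equal to `2` or `4`, or equal to `0`. -/
theorem succ_subset_one_add {n : ℕ} (hn : 1 ≤ n) :
    SigmaSet (n + 1) ⊆ SigmaSet 1 + SigmaSet n := by
  rintro ⟨x, y⟩ hp
  rw [mk_mem_iff] at hp
  have split : ∀ q ∈ SigmaSet 1, (x, y) - q ∈ SigmaSet n → (x, y) ∈ SigmaSet 1 + SigmaSet n :=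
    fun q hq hpq => ⟨q, hq, _, hpq, add_sub_cancel q _⟩
  rcases (by omega : 6 ≤ 4 * x + 3 * y ∨ 2 ≤ 4 * x + 3 * y ∧ 4 * x + 3 * y < 6 ∨
      4 * x + 3 * y = 0) with h | h | h
  · refine split (3, -2) (by simp [mk_mem_iff]) ?_
    rw [Prod.mk_sub_mk, mk_mem_iff]
    omega
  · refine split (-1, 2) (by simp [mk_mem_iff]) ?_
    rw [Prod.mk_sub_mk, mk_mem_iff]
    omega
  · refine split (-3, 4) (by simp [mk_mem_iff]) ?_
    rw [Prod.mk_sub_mk, mk_mem_iff]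
    omega

theorem succ_eq_one_add {n : ℕ} (hn : 1 ≤ n) : SigmaSet (n + 1) = SigmaSet 1 + SigmaSet n :=
  (succ_subset_one_add hn).antisymm (add_comm n 1 ▸ add_subset 1 n)

end SigmaSet

theorem SigmaSet_add_general (ℓ m : ℕ) (hℓ : 1 ≤ ℓ) :
    SigmaSet ℓ + SigmaSet m ⊆ SigmaSet (ℓ + m)
    ∧ SigmaSet ℓ =
        {s | ∃ a : Fin ℓ → ℤ × ℤ, (∀ i, a i ∈ SigmaSet 1) ∧ ∑ i, a i = s} :=
  ⟨SigmaSet.add_subset ℓ m,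
    Set.eq_setOf_fin_sum_of_succ_eq_add (fun _ hn => SigmaSet.succ_eq_one_add hn) hℓ⟩

/-- `Σ_ℓ + Σ_m ⊆ Σ_{ℓ+m}` and `Σ_ℓ` is the `ℓ`-fold sum of `Σ₁`. -/
theorem SigmaSet_add (ℓ m : ℕ) (hℓ : 1 ≤ ℓ) (hm : 1 ≤ m) :
    SigmaSet ℓ + SigmaSet m ⊆ SigmaSet (ℓ + m)
    ∧ SigmaSet ℓ =
        {s | ∃ a : Fin ℓ → ℤ × ℤ, (∀ i, a i ∈ SigmaSet 1) ∧ ∑ i, a i = s} :=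
  SigmaSet_add_general ℓ m hℓ
end
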